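/- The function f : (−1, ∞) → ℝ defined by f(x) = (log(1+x) − x)/(x²/2) for x ≠ 0 and f(0) = −1 is continuous and monotonically increasing on (−1, ∞). -/

import Mathlib

/-!
Away from `0` the quotient rule gives `f'(x) = 2 g(x) / x³` with
`g(x) = 2x - x²/(1+x) - 2 log(1+x)` (`fanNumerator`). Since `g(0) = 0` and
`g'(x) = x²/(1+x)² ≥ 0`, `g` has the sign of `x`, so `f' ≥ 0` on `(-1, 0) ∪ (0, ∞)`.
At `0`, L'Hôpital's rule gives `(log(1+x) - x)/(x²/2) → (-x/(1+x))/x → -1`, so `f` is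
continuous there, and a continuous function whose derivative is nonnegative off a single point
is monotone.
-/

open Real

/-- f(x) = (log(1+x) − x)/(x²/2) for x ≠ 0, with f(0) = −1 (removable singularity). -/
noncomputable def fanRatio (x : ℝ) : ℝ :=
  if x = 0 then -1 else (Real.log (1 + x) - x) / (x ^ 2 / 2)

open Set Filter Topology

theorem monotoneOn_of_hasDerivAt_nonneg_of_ne {D : Set ℝ} (hD : Convex ℝ D) {f f' : ℝ → ℝ}
    {c : ℝ} (hf : ContinuousOn f D) (hf' : ∀ x ∈ interior D, x ≠ c → HasDerivAt f (f' x) x)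
    (hf'₀ : ∀ x ∈ interior D, x ≠ c → 0 ≤ f' x) : MonotoneOn f D := by
  have across : ∀ u ∈ D, ∀ v ∈ D, u ≤ v → c ∉ Ioo u v → f u ≤ f v := by
    intro u hu v hv huv hc
    have hsub : Icc u v ⊆ D := hD.ordConnected.out hu hv
    have hI : ∀ x ∈ interior (Icc u v), x ∈ interior D ∧ x ≠ c := fun x hx =>
      ⟨interior_mono hsub hx, fun h => hc (h ▸ by rwa [interior_Icc] at hx)⟩
    exact monotoneOn_of_hasDerivWithinAt_nonneg (convex_Icc u v) (hf.mono hsub)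
      (fun x hx => (hf' x (hI x hx).1 (hI x hx).2).hasDerivWithinAt)
      (fun x hx => hf'₀ x (hI x hx).1 (hI x hx).2) ⟨le_rfl, huv⟩ ⟨huv, le_rfl⟩ huv
  intro x hx y hy hxy
  by_cases hc : c ∈ Ioo x y
  · have hcD : c ∈ D := hD.ordConnected.out hx hy (Ioo_subset_Icc_self hc)
    exact (across x hx c hcD hc.1.le (by simp)).trans (across c hcD y hy hc.2.le (by simp))
  · exact across x hx y hy hxy hc

lemma fanRatio_of_ne_zero {x : ℝ} (hx : x ≠ 0) :
    fanRatio x = (log (1 + x) - x) / (x ^ 2 / 2) := if_neg hx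

lemma hasDerivAt_log_one_add_sub_self {x : ℝ} (hx : -1 < x) :
    HasDerivAt (fun t => log (1 + t) - t) (-x / (1 + x)) x := by
  have h : HasDerivAt (fun t => log (1 + t)) (1 / (1 + x)) x := by
    simpa using ((hasDerivAt_id' x).const_add 1).log (by linarith)
  refine (h.sub (hasDerivAt_id' x)).congr_deriv ?_
  field_simp [show 1 + x ≠ 0 by linarith]
  ring

lemma hasDerivAt_sq_div_two (x : ℝ) : HasDerivAt (fun t : ℝ => t ^ 2 / 2) x x := by
  simpa using (hasDerivAt_pow 2 x).div_const 2

lemma tendsto_fanRatio_nhdsNE_zero : Tendsto fanRatio (𝓝[≠] 0) (𝓝 (-1)) := by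
  have near : ∀ᶠ x in 𝓝[≠] (0 : ℝ), -1 < x :=
    nhdsWithin_le_nhds (Ioi_mem_nhds (by norm_num))
  have hnum : Tendsto (fun x => log (1 + x) - x) (𝓝[≠] 0) (𝓝 0) := by
    have : ContinuousAt (fun x => log (1 + x) - x) 0 :=
      (hasDerivAt_log_one_add_sub_self (by norm_num)).continuousAt
    simpa using this.tendsto.mono_left nhdsWithin_le_nhds
  have hden : Tendsto (fun x : ℝ => x ^ 2 / 2) (𝓝[≠] 0) (𝓝 0) := by
    simpa using ((hasDerivAt_sq_div_two 0).continuousAt.tendsto).mono_left nhdsWithin_le_nhds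
  have hratio : Tendsto (fun x : ℝ => -x / (1 + x) / x) (𝓝[≠] 0) (𝓝 (-1)) := by
    have : ContinuousAt (fun x : ℝ => -1 / (1 + x)) 0 :=
      continuousAt_const.div (by fun_prop) (by norm_num)
    have hlim : Tendsto (fun x : ℝ => -1 / (1 + x)) (𝓝[≠] 0) (𝓝 (-1)) := by
      simpa using this.tendsto.mono_left nhdsWithin_le_nhds
    refine hlim.congr' ?_
    filter_upwards [near, self_mem_nhdsWithin] with x hx hx0
    field_simp [show 1 + x ≠ 0 by linarith, show x ≠ 0 from hx0]
  have hquot := HasDerivAt.lhopital_zero_nhdsNE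
    (near.mono fun x hx => hasDerivAt_log_one_add_sub_self hx)
    (Eventually.of_forall hasDerivAt_sq_div_two) self_mem_nhdsWithin hnum hden hratio
  exact hquot.congr' (eventually_mem_nhdsWithin.mono fun x hx => (fanRatio_of_ne_zero hx).symm)

noncomputable def fanNumerator (x : ℝ) : ℝ := 2 * x - x ^ 2 / (1 + x) - 2 * log (1 + x)

lemma hasDerivAt_fanRatio {x : ℝ} (hx : -1 < x) (hx0 : x ≠ 0) :
    HasDerivAt fanRatio (2 * fanNumerator x / x ^ 3) x := by
  have hquot := (hasDerivAt_log_one_add_sub_self hx).div (hasDerivAt_sq_div_two x)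
    (by positivity)
  have hfan : (fun t => (log (1 + t) - t) / (t ^ 2 / 2)) =ᶠ[𝓝 x] fanRatio :=
    (eventually_ne_nhds hx0).mono fun t ht => (fanRatio_of_ne_zero ht).symm
  refine (hquot.congr_of_eventuallyEq hfan.symm).congr_deriv ?_
  rw [fanNumerator]
  field_simp [show 1 + x ≠ 0 by linarith]
  ring

lemma continuousOn_fanRatio : ContinuousOn fanRatio (Ioi (-1)) := by
  intro x hx
  rcases eq_or_ne x 0 with rfl | hx0
  · refine (continuousWithinAt_compl_self.mp ?_).continuousWithinAt
    simpa [ContinuousWithinAt, fanRatio] using tendsto_fanRatio_nhdsNE_zero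
  · exact (hasDerivAt_fanRatio hx hx0).continuousAt.continuousWithinAt

lemma hasDerivAt_fanNumerator {x : ℝ} (hx : -1 < x) :
    HasDerivAt fanNumerator (x ^ 2 / (1 + x) ^ 2) x := by
  have h1 : 1 + x ≠ 0 := by linarith
  have hlog : HasDerivAt (fun t => log (1 + t)) (1 / (1 + x)) x := by
    simpa using ((hasDerivAt_id' x).const_add 1).log h1
  have hfrac := (hasDerivAt_pow 2 x).div ((hasDerivAt_id' x).const_add 1) h1
  refine ((((hasDerivAt_id' x).const_mul 2).sub hfrac).sub (hlog.const_mul 2)).congr_deriv ?_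
  field_simp
  ring

lemma monotoneOn_fanNumerator : MonotoneOn fanNumerator (Ioi (-1)) :=
  monotoneOn_of_hasDerivWithinAt_nonneg (f' := fun x => x ^ 2 / (1 + x) ^ 2)
    (convex_Ioi _) (fun x hx => (hasDerivAt_fanNumerator hx).continuousAt.continuousWithinAt)
    (fun x hx => (hasDerivAt_fanNumerator (by simpa using hx)).hasDerivWithinAt)
    (fun x _ => by positivity)

lemma mul_fanNumerator_nonneg {x : ℝ} (hx : -1 < x) : 0 ≤ x * fanNumerator x := by
  have h0 : fanNumerator 0 = 0 := by simp [fanNumerator]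
  have hmem : (0 : ℝ) ∈ Ioi (-1) := by norm_num
  rcases le_total x 0 with hneg | hpos
  · exact mul_nonneg_of_nonpos_of_nonpos hneg (h0 ▸ monotoneOn_fanNumerator hx hmem hneg)
  · exact mul_nonneg hpos (h0 ▸ monotoneOn_fanNumerator hmem hx hpos)

lemma two_mul_fanNumerator_div_pow_three_nonneg {x : ℝ} (hx : -1 < x) :
    0 ≤ 2 * fanNumerator x / x ^ 3 := by
  have hsign := mul_fanNumerator_nonneg hx
  calc 0 ≤ 2 * (x * fanNumerator x) / x ^ 4 := by positivity
    _ = 2 * fanNumerator x / x ^ 3 := by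
      rcases eq_or_ne x 0 with rfl | hx0
      · simp
      · field_simp

/-- The function f is continuous and monotonically increasing on (−1, ∞). -/
theorem fanRatio_continuous_monotone :
    ContinuousOn fanRatio (Set.Ioi (-1 : ℝ)) ∧ MonotoneOn fanRatio (Set.Ioi (-1 : ℝ)) := by
  have hint : ∀ x ∈ interior (Ioi (-1 : ℝ)), -1 < x := fun x hx => by simpa using hx
  exact ⟨continuousOn_fanRatio, monotoneOn_of_hasDerivAt_nonneg_of_ne (c := 0) (convex_Ioi _)
    continuousOn_fanRatio (fun x hx hx0 => hasDerivAt_fanRatio (hint x hx) hx0)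
    (fun x hx _ => two_mul_fanNumerator_div_pow_three_nonneg (hint x hx))⟩
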